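/- arXiv:1609.02975 — 3 statements merged into one kernel-verified Lean document; each statement's English description precedes it below -/
import Mathlib

section
/- Every eta-quasisymmetric homeomorphism between metric spaces is eta'-quasi-Möbius, where eta' depends only on eta. -/
open Set

universe u v

/-- The metric cross-ratio of a quadruple of points. -/
noncomputable def crossRatio {X : Type*} [MetricSpace X] (a b c d : X) : ℝ :=
  dist a c * dist b d / (dist a d * dist b c)

/-- A distortion (control) function `η : [0,∞) → [0,∞)`: a homeomorphism of `[0,∞)`
fixing `0` (continuous, strictly increasing, onto). -/
def IsControlFunction (η : ℝ → ℝ) : Prop :=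
  ContinuousOn η (Ici 0) ∧ StrictMonoOn η (Ici 0) ∧ η 0 = 0 ∧
    MapsTo η (Ici 0) (Ici 0) ∧ SurjOn η (Ici 0) (Ici 0)

/-- Key combinatorial lemma: one of the two factorizations of the cross ratio has
both factors at least `δ`. -/
lemma qm_key (a b c e δ : ℝ) (ha : 0 < a) (hb : 0 < b) (hc : 0 < c) (he : 0 < e)
    (t1 : b ≤ e + a + c) (t2 : a ≤ c + e + b) (t3 : c ≤ a + e + b) (t4 : e ≤ b + a + c)
    (hδ0 : 0 < δ) (hδ1 : δ ≤ 1/3) (hδ2 : 3*δ*(c*e) ≤ a*b) :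
    (δ*c ≤ a ∧ δ*e ≤ b) ∨ (δ*e ≤ a ∧ δ*c ≤ b) := by
  rcases le_or_gt (δ*c) a with h1 | h1
  · rcases le_or_gt (δ*e) b with h2 | h2
    · exact Or.inl ⟨h1, h2⟩
    · rcases le_or_gt (δ*e) a with h3 | h3
      · rcases le_or_gt (δ*c) b with h4 | h4
        · exact Or.inr ⟨h3, h4⟩
        · -- b < δ*e and b < δ*c : use t2
          exfalso
          rcases le_total e c with h5 | h5
          · have p1 : a*b < a*(δ*e) := mul_lt_mul_of_pos_left h2 ha
            have p2 : a < 3*c := by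
              nlinarith [mul_le_mul_of_nonneg_right hδ1 hc.le]
            have p3 : a*(δ*e) < 3*c*(δ*e) := mul_lt_mul_of_pos_right p2 (mul_pos hδ0 he)
            nlinarith
          · have p1 : a*b < a*(δ*c) := mul_lt_mul_of_pos_left h4 ha
            have p2 : a < 3*e := by
              nlinarith [mul_le_mul_of_nonneg_right hδ1 hc.le]
            have p3 : a*(δ*c) < 3*e*(δ*c) := mul_lt_mul_of_pos_right p2 (mul_pos hδ0 hc)
            nlinarith
      · -- b < δ*e and a < δ*e : use t4
        exfalso
        have q1 : e/3 < c := by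
          nlinarith [mul_le_mul_of_nonneg_left hδ1 he.le]
        have q2 : a*b < (δ*e)*(δ*e) := mul_lt_mul'' h3 h2 ha.le hb.le
        nlinarith [mul_lt_mul_of_pos_left q1 (mul_pos hδ0 he),
          mul_le_mul_of_nonneg_right hδ1 (mul_nonneg (mul_nonneg hδ0.le he.le) he.le),
          mul_pos (mul_pos hδ0 he) he]
  · rcases le_or_gt (δ*e) a with h3 | h3
    · rcases le_or_gt (δ*c) b with h4 | h4
      · exact Or.inr ⟨h3, h4⟩
      · -- a < δ*c and b < δ*c : use t3
        exfalso
        have q1 : c/3 < e := by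
          nlinarith [mul_le_mul_of_nonneg_left hδ1 hc.le]
        have q2 : a*b < (δ*c)*(δ*c) := mul_lt_mul'' h1 h4 ha.le hb.le
        nlinarith [mul_lt_mul_of_pos_left q1 (mul_pos hδ0 hc),
          mul_le_mul_of_nonneg_right hδ1 (mul_nonneg (mul_nonneg hδ0.le hc.le) hc.le),
          mul_pos (mul_pos hδ0 hc) hc]
    · -- a < δ*c and a < δ*e : use t1
      exfalso
      rcases le_total e c with h5 | h5
      · have p2 : b < 3*c := by
          nlinarith [mul_le_mul_of_nonneg_right hδ1 hc.le,
            mul_le_mul_of_nonneg_left h5 hδ0.le]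
        have p1 : a*b < (δ*e)*b := mul_lt_mul_of_pos_right h3 hb
        have p3 : (δ*e)*b < (δ*e)*(3*c) := mul_lt_mul_of_pos_left p2 (mul_pos hδ0 he)
        nlinarith
      · have p2 : b < 3*e := by
          nlinarith [mul_le_mul_of_nonneg_right hδ1 he.le,
            mul_le_mul_of_nonneg_left h5 hδ0.le]
        have p1 : a*b < (δ*c)*b := mul_lt_mul_of_pos_right h1 hb
        have p3 : (δ*c)*b < (δ*c)*(3*e) := mul_lt_mul_of_pos_left p2 (mul_pos hδ0 hc)
        nlinarith

lemma qm_contOn (η : ℝ → ℝ) (hcont : ContinuousOn η (Ici 0)) :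
    ContinuousOn (fun t : ℝ => η (Real.sqrt t) * η (3*t+3)) (Ici 0) := by
  apply ContinuousOn.mul
  · exact ContinuousOn.comp hcont Real.continuous_sqrt.continuousOn
      (fun x _ => mem_Ici.mpr (Real.sqrt_nonneg x))
  · exact ContinuousOn.comp hcont
      (Continuous.continuousOn (by continuity : Continuous (fun t : ℝ => 3*t+3)))
      (fun x hx => mem_Ici.mpr (by simp only [mem_Ici] at hx; linarith))

lemma qm_bound1 (η : ℝ → ℝ) (hη : IsControlFunction η) (s u t : ℝ)
    (hs : 0 < s) (hsu : s ≤ u) (ht : s * u = t)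
    (hδ : min (1/3) (t/3) ≤ s) :
    η s * η u ≤ η (Real.sqrt t) * η (3*t+3) := by
  obtain ⟨hcont, hmono, h0, hmaps, hsurj⟩ := hη
  have hu : 0 < u := hs.trans_le hsu
  have ht0 : 0 < t := ht ▸ mul_pos hs hu
  have hm : MonotoneOn η (Ici 0) := hmono.monotoneOn
  have hssq : s ≤ Real.sqrt t := by
    have : Real.sqrt (s*s) ≤ Real.sqrt t := Real.sqrt_le_sqrt (by nlinarith)
    rwa [Real.sqrt_mul_self hs.le] at this
  have hub : u ≤ 3*t+3 := by
    rcases le_total ((1:ℝ)/3) (t/3) with h | h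
    · have h' : (1:ℝ)/3 ≤ s := by rwa [min_eq_left h] at hδ
      nlinarith
    · have h' : t/3 ≤ s := by rwa [min_eq_right h] at hδ
      nlinarith
  have h1 : η s ≤ η (Real.sqrt t) :=
    hm (mem_Ici.mpr hs.le) (mem_Ici.mpr (Real.sqrt_nonneg t)) hssq
  have h2 : η u ≤ η (3*t+3) :=
    hm (mem_Ici.mpr hu.le) (mem_Ici.mpr (by linarith)) hub
  have hn1 : 0 ≤ η u := hmaps (mem_Ici.mpr hu.le)
  have hn2 : 0 ≤ η (Real.sqrt t) := hmaps (mem_Ici.mpr (Real.sqrt_nonneg t))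
  exact mul_le_mul h1 h2 hn1 hn2

lemma qm_bound (η : ℝ → ℝ) (hη : IsControlFunction η) (s u t : ℝ)
    (hs : 0 < s) (hu : 0 < u) (ht : s * u = t)
    (h1 : min (1/3) (t/3) ≤ s) (h2 : min (1/3) (t/3) ≤ u) :
    η s * η u ≤ η (Real.sqrt t) * η (3*t+3) := by
  rcases le_total s u with h | h
  · exact qm_bound1 η hη s u t hs h ht h1
  · have := qm_bound1 η hη u s t hu h (by rw [mul_comm]; exact ht) h2
    rw [mul_comm (η s) (η u)]
    exact this

/-- Every `η`-quasisymmetric homeomorphism between metric spaces is `η'`-quasi-Möbius,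
where `η'` depends only on `η`. -/
theorem quasisymmetric_implies_quasiMoebius (η : ℝ → ℝ) (hη : IsControlFunction η) :
    ∃ η' : ℝ → ℝ, IsControlFunction η' ∧
      ∀ (X : Type u) (Y : Type v) [MetricSpace X] [MetricSpace Y] (f : X ≃ₜ Y),
        (∀ x1 x2 x3 : X, x1 ≠ x2 → x1 ≠ x3 → x2 ≠ x3 →
          dist (f x1) (f x2) / dist (f x1) (f x3) ≤ η (dist x1 x2 / dist x1 x3)) →
        ∀ x1 x2 x3 x4 : X, x1 ≠ x2 → x1 ≠ x3 → x1 ≠ x4 → x2 ≠ x3 → x2 ≠ x4 → x3 ≠ x4 →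
          crossRatio (f x1) (f x2) (f x3) (f x4) ≤ η' (crossRatio x1 x2 x3 x4) := by
  obtain ⟨hcont, hmono, h0, hmaps, hsurj⟩ := hη
  have hη' : IsControlFunction η := ⟨hcont, hmono, h0, hmaps, hsurj⟩
  have hm : MonotoneOn η (Ici 0) := hmono.monotoneOn
  have hη3 : 0 < η 3 := by
    have := hmono (mem_Ici.mpr le_rfl) (mem_Ici.mpr (by norm_num : (0:ℝ) ≤ 3)) (by norm_num)
    rwa [h0] at this
  refine ⟨fun t => η (Real.sqrt t) * η (3*t+3), ⟨qm_contOn η hcont, ?_, ?_, ?_, ?_⟩, ?_⟩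
  · -- strict mono
    intro x hx y hy hxy
    simp only [mem_Ici] at hx hy
    have hA : η (Real.sqrt x) < η (Real.sqrt y) :=
      hmono (mem_Ici.mpr (Real.sqrt_nonneg x)) (mem_Ici.mpr (Real.sqrt_nonneg y))
        (Real.sqrt_lt_sqrt hx hxy)
    have hB : η (3*x+3) ≤ η (3*y+3) :=
      hm (mem_Ici.mpr (by linarith)) (mem_Ici.mpr (by linarith)) (by linarith)
    have hBpos : 0 < η (3*x+3) := by
      have := hmono (mem_Ici.mpr le_rfl) (mem_Ici.mpr (by linarith : (0:ℝ) ≤ 3*x+3))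
        (by linarith)
      rwa [h0] at this
    have hn : 0 ≤ η (Real.sqrt x) := hmaps (mem_Ici.mpr (Real.sqrt_nonneg x))
    calc η (Real.sqrt x) * η (3*x+3) ≤ η (Real.sqrt x) * η (3*y+3) :=
          mul_le_mul_of_nonneg_left hB hn
      _ < η (Real.sqrt y) * η (3*y+3) :=
          mul_lt_mul_of_pos_right hA (lt_of_lt_of_le hBpos hB)
  · -- value at 0
    simp [Real.sqrt_zero, h0]
  · -- maps to
    intro x hx
    simp only [mem_Ici] at hx ⊢
    exact mul_nonneg (hmaps (mem_Ici.mpr (Real.sqrt_nonneg x)))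
      (hmaps (mem_Ici.mpr (by linarith)))
  · -- surjectivity
    intro y hy
    simp only [mem_Ici] at hy
    obtain ⟨x, hx, hxe⟩ := hsurj (show y / η 3 + 1 ∈ Ici 0 from
      mem_Ici.mpr (by positivity))
    simp only [mem_Ici] at hx
    have hval : y ≤ η (Real.sqrt (x*x)) * η (3*(x*x)+3) := by
      rw [Real.sqrt_mul_self hx, hxe]
      have h3le : η 3 ≤ η (3*(x*x)+3) :=
        hm (mem_Ici.mpr (by norm_num)) (mem_Ici.mpr (by positivity)) (by nlinarith)
      have hstep : (y / η 3 + 1) * η 3 ≤ (y / η 3 + 1) * η (3*(x*x)+3) :=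
        mul_le_mul_of_nonneg_left h3le (by positivity)
      have heq : (y / η 3 + 1) * η 3 = y + η 3 := by
        field_simp
      nlinarith
    have hsub : Icc (0:ℝ) (x*x) ⊆ Ici 0 := fun z hz => mem_Ici.mpr hz.1
    have hivt := intermediate_value_Icc (by positivity : (0:ℝ) ≤ x*x)
      ((qm_contOn η hcont).mono hsub)
    have hy' : y ∈ Icc (η (Real.sqrt 0) * η (3*0+3)) (η (Real.sqrt (x*x)) * η (3*(x*x)+3)) := by
      constructor
      · rw [Real.sqrt_zero, h0, zero_mul]; exact hy
      · exact hval
    obtain ⟨z, hz, hze⟩ := hivt hy'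
    exact ⟨z, hsub hz, hze⟩
  · -- the main quasi-Möbius estimate
    intro X Y _ _ f hqs x1 x2 x3 x4 h12 h13 h14 h23 h24 h34
    have finj : Function.Injective f := f.injective
    have ha : 0 < dist x1 x3 := dist_pos.mpr h13
    have hb : 0 < dist x2 x4 := dist_pos.mpr h24
    have hc : 0 < dist x1 x4 := dist_pos.mpr h14
    have he : 0 < dist x2 x3 := dist_pos.mpr h23
    -- triangle inequalities
    have t1 : dist x2 x4 ≤ dist x2 x3 + dist x1 x3 + dist x1 x4 := by
      linarith [dist_triangle x2 x3 x4, dist_triangle x3 x1 x4, dist_comm x3 x1]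
    have t2 : dist x1 x3 ≤ dist x1 x4 + dist x2 x3 + dist x2 x4 := by
      linarith [dist_triangle x1 x4 x3, dist_triangle x4 x2 x3, dist_comm x4 x2]
    have t3 : dist x1 x4 ≤ dist x1 x3 + dist x2 x3 + dist x2 x4 := by
      linarith [dist_triangle x1 x3 x4, dist_triangle x3 x2 x4, dist_comm x3 x2]
    have t4 : dist x2 x3 ≤ dist x2 x4 + dist x1 x3 + dist x1 x4 := by
      linarith [dist_triangle x2 x4 x3, dist_triangle x4 x1 x3, dist_comm x4 x1]
    set a := dist x1 x3 with ha_def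
    set b := dist x2 x4 with hb_def
    set c := dist x1 x4 with hc_def
    set e := dist x2 x3 with he_def
    have hcr : crossRatio x1 x2 x3 x4 = a*b/(c*e) := rfl
    set t := crossRatio x1 x2 x3 x4 with ht_def
    have ht0 : 0 < t := by rw [hcr]; positivity
    set δ := min ((1:ℝ)/3) (t/3) with hδ_def
    have hδ0 : 0 < δ := lt_min (by norm_num) (by linarith)
    have hδ1 : δ ≤ 1/3 := min_le_left _ _
    have hδ2 : 3*δ*(c*e) ≤ a*b := by
      have h' : δ ≤ t/3 := by rw [hδ_def]; exact min_le_right _ _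
      have h3δ : 3*δ ≤ t := by linarith
      have hce : 0 < c*e := mul_pos hc he
      calc 3*δ*(c*e) ≤ t*(c*e) := mul_le_mul_of_nonneg_right h3δ hce.le
        _ = a*b := by rw [hcr]; field_simp
    have hA : 0 < dist (f x1) (f x3) := dist_pos.mpr (fun h => h13 (finj h))
    have hB : 0 < dist (f x2) (f x4) := dist_pos.mpr (fun h => h24 (finj h))
    have hC : 0 < dist (f x1) (f x4) := dist_pos.mpr (fun h => h14 (finj h))
    have hE : 0 < dist (f x2) (f x3) := dist_pos.mpr (fun h => h23 (finj h))
    have e1 : crossRatio (f x1) (f x2) (f x3) (f x4)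
        = (dist (f x1) (f x3) / dist (f x1) (f x4))
          * (dist (f x2) (f x4) / dist (f x2) (f x3)) := by
      unfold crossRatio; rw [div_mul_div_comm]
    have e2 : crossRatio (f x1) (f x2) (f x3) (f x4)
        = (dist (f x3) (f x1) / dist (f x3) (f x2))
          * (dist (f x4) (f x2) / dist (f x4) (f x1)) := by
      unfold crossRatio
      rw [dist_comm (f x3) (f x1), dist_comm (f x3) (f x2),
        dist_comm (f x4) (f x2), dist_comm (f x4) (f x1)]
      ring
    rcases qm_key a b c e δ ha hb hc he t1 t2 t3 t4 hδ0 hδ1 hδ2 with ⟨k1, k2⟩ | ⟨k1, k2⟩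
    · have hs : 0 < a/c := div_pos ha hc
      have hu : 0 < b/e := div_pos hb he
      have hδs : δ ≤ a/c := (le_div_iff₀ hc).mpr k1
      have hδu : δ ≤ b/e := (le_div_iff₀ he).mpr k2
      have hts : (a/c) * (b/e) = t := by rw [hcr]; field_simp; try ring
      have q1 : dist (f x1) (f x3) / dist (f x1) (f x4) ≤ η (a/c) :=
        hqs x1 x3 x4 h13 h14 h34
      have q2 : dist (f x2) (f x4) / dist (f x2) (f x3) ≤ η (b/e) :=
        hqs x2 x4 x3 h24 h23 h34.symm
      have hbound := qm_bound η hη' (a/c) (b/e) t hs hu hts hδs hδu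
      calc crossRatio (f x1) (f x2) (f x3) (f x4)
          = (dist (f x1) (f x3) / dist (f x1) (f x4))
            * (dist (f x2) (f x4) / dist (f x2) (f x3)) := e1
        _ ≤ η (a/c) * η (b/e) :=
            mul_le_mul q1 q2 (by positivity) (hmaps (mem_Ici.mpr (by positivity)))
        _ ≤ η (Real.sqrt t) * η (3*t+3) := hbound
    · have hs : 0 < a/e := div_pos ha he
      have hu : 0 < b/c := div_pos hb hc
      have hδs : δ ≤ a/e := (le_div_iff₀ he).mpr k1
      have hδu : δ ≤ b/c := (le_div_iff₀ hc).mpr k2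
      have hts : (a/e) * (b/c) = t := by rw [hcr]; field_simp; try ring
      have q1 : dist (f x3) (f x1) / dist (f x3) (f x2) ≤ η (a/e) := by
        have := hqs x3 x1 x2 h13.symm h23.symm h12
        rwa [dist_comm x3 x1, dist_comm x3 x2] at this
      have q2 : dist (f x4) (f x2) / dist (f x4) (f x1) ≤ η (b/c) := by
        have := hqs x4 x2 x1 h24.symm h14.symm h12.symm
        rwa [dist_comm x4 x2, dist_comm x4 x1] at this
      have hbound := qm_bound η hη' (a/e) (b/c) t hs hu hts hδs hδu
      calc crossRatio (f x1) (f x2) (f x3) (f x4)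
          = (dist (f x3) (f x1) / dist (f x3) (f x2))
            * (dist (f x4) (f x2) / dist (f x4) (f x1)) := e2
        _ ≤ η (a/e) * η (b/c) :=
            mul_le_mul q1 q2 (by positivity) (hmaps (mem_Ici.mpr (by positivity)))
        _ ≤ η (Real.sqrt t) * η (3*t+3) := hbound
end

section
/- Every Möbius homeomorphism between bounded metric spaces, i.e. an eta-quasi-Möbius map with eta(t) = t, preserves cross-ratios, and, if moreover eta is linear (eta(t) = Ct) and the spaces are bounded, the map is bi-Lipschitz. -/
open Set

/-- Four pairwise distinct points. -/
def QuadDistinct {X : Type*} (a b c d : X) : Prop :=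
  a ≠ b ∧ a ≠ c ∧ a ≠ d ∧ b ≠ c ∧ b ≠ d ∧ c ≠ d

private lemma key_ineq (C a1 a2 a3 a4 b1 b2 b3 b4 : ℝ)
    (ha1 : 0 < a1) (ha2 : 0 < a2) (ha3 : 0 < a3) (ha4 : 0 < a4)
    (hb1 : 0 < b1) (hb2 : 0 < b2) (hb3 : 0 < b3) (hb4 : 0 < b4)
    (h : b3 * b4 / (b1 * b2) ≤ C * (a3 * a4 / (a1 * a2))) :
    a1 * a2 / (a3 * a4) ≤ C * (b1 * b2 / (b3 * b4)) := by
  rw [← mul_div_assoc] at h ⊢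
  rw [div_le_div_iff₀ (by positivity) (by positivity)] at h ⊢
  nlinarith [h]

private lemma qm_lower {X Y : Type*} [MetricSpace X] [MetricSpace Y]
    (f : X → Y) (hf : Function.Injective f) (C : ℝ)
    (hqm : ∀ a b c d : X, QuadDistinct a b c d →
      crossRatio (f a) (f b) (f c) (f d) ≤ C * crossRatio a b c d)
    (a b c d : X) (h : QuadDistinct a b c d) :
    crossRatio a b c d ≤ C * crossRatio (f a) (f b) (f c) (f d) := by
  obtain ⟨hab, hac, had, hbc, hbd, hcd⟩ := h
  have h' := hqm a b d c ⟨hab, had, hac, hbd, hbc, Ne.symm hcd⟩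
  unfold crossRatio at h' ⊢
  exact key_ineq C _ _ _ _ _ _ _ _ (dist_pos.2 hac) (dist_pos.2 hbd) (dist_pos.2 had)
    (dist_pos.2 hbc) (dist_pos.2 (hf.ne hac)) (dist_pos.2 (hf.ne hbd))
    (dist_pos.2 (hf.ne had)) (dist_pos.2 (hf.ne hbc)) h'

private lemma select_points {X : Type*} [MetricSpace X] (p : Fin 5 → X)
    (hpinj : Function.Injective p) (c : ℝ) (hc : 0 < c)
    (hsep : ∀ i j, i ≠ j → 3 * c ≤ dist (p i) (p j)) (x y : X) :
    ∃ i j : Fin 5, i ≠ j ∧ p i ≠ x ∧ p j ≠ y ∧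
      c ≤ dist x (p j) ∧ c ≤ dist (p i) y := by
  classical
  have hcard1 : ∀ z : X,
      (Finset.univ.filter (fun i : Fin 5 => dist z (p i) < c)).card ≤ 1 := by
    intro z
    refine Finset.card_le_one.2 ?_
    intro a ha b hb
    simp only [Finset.mem_filter] at ha hb
    by_contra hne
    have h1 := hsep a b hne
    have h2 := dist_triangle (p a) z (p b)
    rw [dist_comm (p a) z] at h2
    linarith [ha.2, hb.2]
  have hcard2 : ∀ w : X,
      (Finset.univ.filter (fun i : Fin 5 => p i = w)).card ≤ 1 := by
    intro w
    refine Finset.card_le_one.2 ?_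
    intro a ha b hb
    simp only [Finset.mem_filter] at ha hb
    exact hpinj (ha.2.trans hb.2.symm)
  have hgood : ∀ z w : X,
      3 ≤ (Finset.univ.filter
        (fun i : Fin 5 => c ≤ dist z (p i) ∧ p i ≠ w)).card := by
    intro z w
    have hsub : (Finset.univ : Finset (Fin 5)) ⊆
        (Finset.univ.filter (fun i : Fin 5 => c ≤ dist z (p i) ∧ p i ≠ w)) ∪
        (Finset.univ.filter (fun i : Fin 5 => dist z (p i) < c)) ∪
        (Finset.univ.filter (fun i : Fin 5 => p i = w)) := by
      intro i _
      simp only [Finset.mem_union, Finset.mem_filter, Finset.mem_univ, true_and]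
      rcases lt_or_ge (dist z (p i)) c with h | h
      · tauto
      · rcases eq_or_ne (p i) w with h' | h' <;> tauto
    have h5 : (Finset.univ : Finset (Fin 5)).card = 5 := by simp
    have hle := Finset.card_le_card hsub
    have hu1 := Finset.card_union_le
      ((Finset.univ.filter (fun i : Fin 5 => c ≤ dist z (p i) ∧ p i ≠ w)) ∪
        (Finset.univ.filter (fun i : Fin 5 => dist z (p i) < c)))
      (Finset.univ.filter (fun i : Fin 5 => p i = w))
    have hu2 := Finset.card_union_le
      (Finset.univ.filter (fun i : Fin 5 => c ≤ dist z (p i) ∧ p i ≠ w))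
      (Finset.univ.filter (fun i : Fin 5 => dist z (p i) < c))
    have hc1 := hcard1 z
    have hc2 := hcard2 w
    omega
  have hJ := hgood x y
  obtain ⟨j, hj⟩ := Finset.card_pos.1 (by omega : 0 <
    (Finset.univ.filter (fun i : Fin 5 => c ≤ dist x (p i) ∧ p i ≠ y)).card)
  have hI := hgood y x
  have hIe : 0 < ((Finset.univ.filter
      (fun i : Fin 5 => c ≤ dist y (p i) ∧ p i ≠ x)).erase j).card := by
    have := Finset.pred_card_le_card_erase (s :=
      Finset.univ.filter (fun i : Fin 5 => c ≤ dist y (p i) ∧ p i ≠ x)) (a := j)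
    omega
  obtain ⟨i, hi⟩ := Finset.card_pos.1 hIe
  rw [Finset.mem_erase] at hi
  simp only [Finset.mem_filter, Finset.mem_univ, true_and] at hj hi
  exact ⟨i, j, hi.1, hi.2.2, hj.2, hj.1, by rw [dist_comm]; exact hi.2.1⟩

private lemma min_sep {Z : Type*} [MetricSpace Z] (q : Fin 5 → Z)
    (hq : Function.Injective q) :
    ∃ ε : ℝ, 0 < ε ∧ ∀ i j, i ≠ j → ε ≤ dist (q i) (q j) := by
  classical
  let pairs : Finset (Fin 5 × Fin 5) := Finset.univ.filter (fun r => r.1 ≠ r.2)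
  have hne : pairs.Nonempty := ⟨(0, 1), by simp [pairs]⟩
  let T := pairs.image (fun r => dist (q r.1) (q r.2))
  have hTne : T.Nonempty := hne.image _
  refine ⟨T.min' hTne, ?_, ?_⟩
  · apply (Finset.lt_min'_iff _ _).2
    intro b hb
    obtain ⟨r, hr, rfl⟩ := Finset.mem_image.1 hb
    have hr' : r.1 ≠ r.2 := (Finset.mem_filter.1 hr).2
    exact dist_pos.2 fun h => hr' (hq h)
  · intro i j hij
    exact Finset.min'_le _ _ (Finset.mem_image.2
      ⟨(i, j), Finset.mem_filter.2 ⟨Finset.mem_univ _, hij⟩, rfl⟩)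

private lemma lip_of_qm {X Y : Type*} [MetricSpace X] [MetricSpace Y]
    (hX : Bornology.IsBounded (univ : Set X)) (hY : Bornology.IsBounded (univ : Set Y))
    (f : X → Y) (hf : Function.Injective f) (C : ℝ) (hC : 1 ≤ C)
    (hqm : ∀ a b c d : X, QuadDistinct a b c d →
      crossRatio (f a) (f b) (f c) (f d) ≤ C * crossRatio a b c d) :
    ∃ L : ℝ, 0 ≤ L ∧ ∀ x y : X, dist (f x) (f y) ≤ L * dist x y := by
  classical
  cases finite_or_infinite X with
  | inl hfin =>
      haveI := Fintype.ofFinite X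
      rcases isEmpty_or_nonempty X with hemp | hne
      · exact ⟨0, le_refl 0, fun x _ => (hemp.false x).elim⟩
      · let S : Finset ℝ :=
          Finset.univ.image (fun q : X × X => dist (f q.1) (f q.2) / dist q.1 q.2)
        have hSne : S.Nonempty := Finset.Nonempty.image Finset.univ_nonempty _
        refine ⟨max 0 (S.max' hSne), le_max_left _ _, fun x y => ?_⟩
        rcases eq_or_ne x y with rfl | hxy
        · simp
        · have hd : 0 < dist x y := dist_pos.2 hxy
          have hmem : dist (f x) (f y) / dist x y ∈ S :=
            Finset.mem_image.2 ⟨(x, y), Finset.mem_univ _, rfl⟩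
          have h1 : dist (f x) (f y) / dist x y ≤ max 0 (S.max' hSne) :=
            le_trans (Finset.le_max' S _ hmem) (le_max_right _ _)
          calc dist (f x) (f y) = dist (f x) (f y) / dist x y * dist x y := by
                field_simp
            _ ≤ max 0 (S.max' hSne) * dist x y :=
                mul_le_mul_of_nonneg_right h1 dist_nonneg
  | inr hinf =>
      obtain ⟨p, hpinj⟩ : ∃ p : Fin 5 → X, Function.Injective p := by
        let e := Infinite.natEmbedding X
        exact ⟨fun i => e i, fun i j h => Fin.ext (e.injective h)⟩
      obtain ⟨δ, hδpos, hδle⟩ := min_sep p hpinj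
      obtain ⟨ε, hεpos, hεle'⟩ := min_sep (f ∘ p) (hf.comp hpinj)
      have hεle : ∀ i j, i ≠ j → ε ≤ dist (f (p i)) (f (p j)) := hεle'
      obtain ⟨c, hc, hsep⟩ : ∃ c : ℝ, 0 < c ∧ ∀ i j, i ≠ j → 3 * c ≤ dist (p i) (p j) :=
        ⟨δ / 3, by linarith, fun i j hij => by have := hδle i j hij; linarith⟩
      have hcd : ∀ i j, i ≠ j → c ≤ dist (p i) (p j) := fun i j hij => by
        have := hsep i j hij; linarith
      have hsel := select_points p hpinj c hc hsep
      set Dx := Metric.diam (univ : Set X) with hDx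
      set Dy := Metric.diam (univ : Set Y) with hDy
      have hdx : ∀ a b : X, dist a b ≤ Dx := fun a b =>
        Metric.dist_le_diam_of_mem hX (mem_univ a) (mem_univ b)
      have hdy : ∀ a b : Y, dist a b ≤ Dy := fun a b =>
        Metric.dist_le_diam_of_mem hY (mem_univ a) (mem_univ b)
      have hDx0 : 0 ≤ Dx := Metric.diam_nonneg
      have hDy0 : 0 < Dy :=
        lt_of_lt_of_le hεpos (le_trans (hεle 0 1 (by decide)) (hdy _ _))
      have hC0 : (0:ℝ) < C := lt_of_lt_of_le one_pos hC
      refine ⟨C * Dx * (Dy * Dy) / (ε * (c * c)),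
        div_nonneg (mul_nonneg (mul_nonneg hC0.le hDx0)
          (mul_nonneg hDy0.le hDy0.le))
          (mul_nonneg hεpos.le (mul_nonneg hc.le hc.le)), fun x y => ?_⟩
      rcases eq_or_ne x y with rfl | hxy
      · simp
      obtain ⟨i, j, hij, hix, hjy, hxj, hiy⟩ := hsel x y
      set u := p i with hu
      set v := p j with hv
      have hxv : x ≠ v := fun h => by
        rw [h] at hxj; simp at hxj; linarith
      have huy : u ≠ y := fun h => by
        rw [h] at hiy; simp at hiy; linarith
      have quad : QuadDistinct x u y v :=
        ⟨Ne.symm hix, hxy, hxv, huy, fun h => hij (hpinj h), Ne.symm hjy⟩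
      have h1 := hqm x u y v quad
      have dxv : 0 < dist x v := lt_of_lt_of_le hc hxj
      have duy : 0 < dist u y := lt_of_lt_of_le hc hiy
      have dfxv : 0 < dist (f x) (f v) := dist_pos.2 (hf.ne hxv)
      have dfuy : 0 < dist (f u) (f y) := dist_pos.2 (hf.ne huy)
      have hεuv : ε ≤ dist (f u) (f v) := hεle i j hij
      have e1 : dist (f x) (f y) * ε / (Dy * Dy) ≤
          crossRatio (f x) (f u) (f y) (f v) := by
        unfold crossRatio
        exact div_le_div₀ (mul_nonneg dist_nonneg dist_nonneg)
          (mul_le_mul_of_nonneg_left hεuv dist_nonneg)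
          (mul_pos dfxv dfuy)
          (mul_le_mul (hdy _ _) (hdy _ _) dist_nonneg hDy0.le)
      have e2 : C * crossRatio x u y v ≤ C * (dist x y * Dx / (c * c)) := by
        apply mul_le_mul_of_nonneg_left _ hC0.le
        unfold crossRatio
        exact div_le_div₀ (mul_nonneg dist_nonneg hDx0)
          (mul_le_mul_of_nonneg_left (hdx u v) dist_nonneg)
          (mul_pos hc hc)
          (mul_le_mul hxj hiy hc.le dist_nonneg)
      have e3 : dist (f x) (f y) * ε / (Dy * Dy) ≤ C * (dist x y * Dx / (c * c)) :=
        le_trans e1 (le_trans h1 e2)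
      rw [← mul_div_assoc] at e3
      rw [div_le_div_iff₀ (mul_pos hDy0 hDy0) (mul_pos hc hc)] at e3
      rw [div_mul_eq_mul_div, le_div_iff₀ (mul_pos hεpos (mul_pos hc hc))]
      nlinarith [e3]

/-- A homeomorphism between bounded metric spaces which is `η`-quasi-Möbius with a linear
distortion function `η(t) = C·t`, `C ≥ 1`, is bi-Lipschitz; and if moreover `C = 1`
(i.e. the map is Möbius) it preserves all cross-ratios. -/
theorem moebius_preserves_crossratio_and_linear_quasiMoebius_is_biLipschitz
    {X : Type*} {Y : Type*} [MetricSpace X] [MetricSpace Y]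
    (hX : Bornology.IsBounded (univ : Set X)) (hY : Bornology.IsBounded (univ : Set Y))
    (f : X ≃ₜ Y) (C : ℝ) (hC : 1 ≤ C)
    (hqm : ∀ a b c d : X, QuadDistinct a b c d →
      crossRatio (f a) (f b) (f c) (f d) ≤ C * crossRatio a b c d) :
    ((C = 1) → ∀ a b c d : X, QuadDistinct a b c d →
        crossRatio (f a) (f b) (f c) (f d) = crossRatio a b c d) ∧
      ∃ K : ℝ, 1 ≤ K ∧ ∀ x y : X,
        dist x y ≤ K * dist (f x) (f y) ∧ dist (f x) (f y) ≤ K * dist x y := by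
  constructor
  · intro hC1 a b c d h
    subst hC1
    have h1 := hqm a b c d h
    have h2 := qm_lower f f.injective 1 hqm a b c d h
    rw [one_mul] at h1 h2
    exact le_antisymm h1 h2
  · obtain ⟨L1, hL1, hf1⟩ := lip_of_qm hX hY f f.injective C hC hqm
    have hqm' : ∀ a b c d : Y, QuadDistinct a b c d →
        crossRatio (f.symm a) (f.symm b) (f.symm c) (f.symm d) ≤
          C * crossRatio a b c d := by
      intro a b c d h
      obtain ⟨h1, h2, h3, h4, h5, h6⟩ := h
      have hd : QuadDistinct (f.symm a) (f.symm b) (f.symm c) (f.symm d) :=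
        ⟨f.symm.injective.ne h1, f.symm.injective.ne h2, f.symm.injective.ne h3,
          f.symm.injective.ne h4, f.symm.injective.ne h5, f.symm.injective.ne h6⟩
      have := qm_lower f f.injective C hqm _ _ _ _ hd
      simpa [Homeomorph.apply_symm_apply] using this
    obtain ⟨L2, hL2, hf2⟩ := lip_of_qm hY hX f.symm f.symm.injective C hC hqm'
    refine ⟨max 1 (max L1 L2), le_max_left _ _, fun x y => ⟨?_, ?_⟩⟩
    · have h := hf2 (f x) (f y)
      simp only [Homeomorph.symm_apply_apply] at h
      calc dist x y ≤ L2 * dist (f x) (f y) := h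
        _ ≤ max 1 (max L1 L2) * dist (f x) (f y) :=
          mul_le_mul_of_nonneg_right
            (le_trans (le_max_right L1 L2) (le_max_right _ _)) dist_nonneg
    · calc dist (f x) (f y) ≤ L1 * dist x y := hf1 x y
        _ ≤ max 1 (max L1 L2) * dist x y :=
          mul_le_mul_of_nonneg_right
            (le_trans (le_max_left L1 L2) (le_max_right _ _)) dist_nonneg
end

section
/- Path lifting for Lipschitz quotients: let X be a proper metric space, Y a metric space, and F : X → Y a Lipschitz quotient with co-Lipschitz constant c > 0. If γ : [0,T] → Y is a 1-Lipschitz curve with γ(0) = F(x) for some x ∈ X, then there exists a (1/c)-Lipschitz curve γ̃ : [0,T] → X with γ̃(0) = x and F ∘ γ̃ = γ. -/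
open Metric Set Function
open scoped NNReal

/-!
Properness upgrades the co-Lipschitz condition to exact point lifting: every `y` has a preimage
within `dist y (F x) / c` of `x`, since the fibre over `y` is closed and the distance from `x` to
a closed set is attained. Lifting greedily in increasing order of time then gives `c⁻¹`-Lipschitz
lifts on every finite set of times, all with values in `closedBall x (T / c)`. The lifting and
Lipschitz conditions are closed in the product topology, so by Tychonoff the compact space of
maps `ℝ → closedBall x (T / c)` contains a map satisfying all of them at once.
-/

section Lifting

variable {X Y : Type*}

theorem exists_preimage_dist_le_of_ball_subset_image [PseudoMetricSpace X] [ProperSpace X]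
    [MetricSpace Y] {F : X → Y} (hF : Continuous F) {c : ℝ≥0} (hc : 0 < c)
    (hco : ∀ (x : X) (r : ℝ), 0 < r → ball (F x) ((c : ℝ) * r) ⊆ F '' ball x r) (x : X) (y : Y) :
    ∃ x', F x' = y ∧ dist x' x ≤ c⁻¹ * dist y (F x) := by
  have hnear : ∀ ε > 0, ∃ z ∈ F ⁻¹' {y}, dist x z < c⁻¹ * dist y (F x) + ε := by
    intro ε hε
    have hy : y ∈ ball (F x) (c * (c⁻¹ * dist y (F x) + ε)) := by
      rw [mem_ball, NNReal.coe_inv, mul_add, mul_inv_cancel_left₀ (by positivity)]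
      exact lt_add_of_pos_right _ (by positivity)
    obtain ⟨z, hz, rfl⟩ := hco x _ (by positivity) hy
    exact ⟨z, rfl, by rwa [dist_comm, ← mem_ball]⟩
  obtain ⟨z, hz, -⟩ := hnear 1 one_pos
  obtain ⟨x', hx', hdist⟩ :=
    (isClosed_singleton.preimage hF).exists_infDist_eq_dist ⟨z, hz⟩ x
  refine ⟨x', hx', ?_⟩
  rw [dist_comm, ← hdist]
  refine le_of_forall_pos_lt_add fun ε hε => ?_
  obtain ⟨z, hz, hzx⟩ := hnear ε hε
  exact (infDist_le_dist_of_mem hz).trans_lt hzx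

theorem LipschitzOnWith.update_insert_of_lt [PseudoMetricSpace X] {K : ℝ≥0} {g : ℝ → X}
    {s : Set ℝ} {m a : ℝ} {y : X}
    (hg : LipschitzOnWith K g s) (hm : m ∈ s) (hs : ∀ t ∈ s, t ≤ m) (hma : m < a)
    (hy : dist y (g m) ≤ K * dist a m) : LipschitzOnWith K (update g a y) (insert a s) := by
  have hnew : ∀ t ∈ s, dist y (g t) ≤ K * dist a t := fun t ht => calc
    dist y (g t) ≤ dist y (g m) + dist (g m) (g t) := dist_triangle _ _ _
    _ ≤ K * dist a m + K * dist m t := add_le_add hy (hg.dist_le_mul m hm t ht)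
    _ = K * dist a t := by
      rw [Real.dist_eq, Real.dist_eq, Real.dist_eq, abs_of_pos (by linarith),
        abs_of_nonneg (by linarith [hs t ht]), abs_of_pos (by linarith [hs t ht])]
      ring
  have hupd : ∀ t ∈ s, update g a y t = g t := fun t ht =>
    update_of_ne (ne_of_lt ((hs t ht).trans_lt hma)) _ _
  refine LipschitzOnWith.of_dist_le_mul fun u hu v hv => ?_
  rcases hu with rfl | hu <;> rcases hv with rfl | hv
  · simp
  · rw [update_self, hupd v hv]
    exact hnew v hv
  · rw [update_self, hupd u hu, dist_comm, dist_comm u]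
    exact hnew u hu
  · rw [hupd u hu, hupd v hv]
    exact hg.dist_le_mul u hu v hv

theorem exists_lift_on_finset [PseudoMetricSpace X] [PseudoMetricSpace Y] {F : X → Y} {c K : ℝ≥0}
    (hlift : ∀ x y, ∃ x', F x' = y ∧ dist x' x ≤ c⁻¹ * dist y (F x)) {γ : ℝ → Y} {x : X}
    (hx : γ 0 = F x) (S : Finset ℝ) (hS : ∀ t ∈ S, 0 < t)
    (hγ : LipschitzOnWith K γ (insert 0 S)) :
    ∃ g : ℝ → X, LipschitzOnWith (c⁻¹ * K) g (insert 0 S) ∧ EqOn (F ∘ g) γ (insert 0 S) ∧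
      ∀ t ∉ S, g t = x := by
  classical
  induction S using Finset.induction_on_max with
  | empty => exact ⟨fun _ => x, (LipschitzWith.const' x).lipschitzOnWith, by simp [hx], by simp⟩
  | insert a S hlt ih =>
    obtain ⟨g, hgL, hgF, hgx⟩ := ih (fun t ht => hS t (Finset.mem_insert_of_mem ht))
      (hγ.mono (insert_subset_insert (by simp)))
    have hne : (insert 0 S).Nonempty := Finset.insert_nonempty 0 S
    set m := (insert 0 S).max' hne
    have hm : m ∈ insert 0 S := Finset.max'_mem _ hne
    have hma : m < a := by
      rcases Finset.mem_insert.1 hm with h | h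
      · exact h ▸ hS a (Finset.mem_insert_self a S)
      · exact hlt m h
    obtain ⟨y, hyF, hy⟩ := hlift (g m) (γ a)
    have hm' : m ∈ insert (0 : ℝ) (S : Set ℝ) := by simpa using hm
    have hγm : dist (γ a) (F (g m)) ≤ K * dist a m := by
      rw [← comp_apply (f := F), hgF hm']
      exact hγ.dist_le_mul a (by simp) m (insert_subset_insert (by simp) hm')
    refine ⟨update g a y, ?_, fun t ht => ?_, fun t ht => ?_⟩
    · rw [Finset.coe_insert, insert_comm]
      refine hgL.update_insert_of_lt hm' (fun t ht => Finset.le_max' _ t (by simpa using ht))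
        hma ?_
      calc dist y (g m) ≤ c⁻¹ * dist (γ a) (F (g m)) := hy
        _ ≤ c⁻¹ * (K * dist a m) := by gcongr
        _ = (c⁻¹ * K : ℝ≥0) * dist a m := by push_cast; ring
    · rcases eq_or_ne t a with rfl | hta
      · simp [hyF]
      · rw [comp_apply, update_of_ne hta]
        exact hgF (by simpa [hta] using ht)
    · rw [Finset.mem_insert, not_or] at ht
      rw [update_of_ne ht.1, hgx t ht.2]

theorem exists_bounded_lift_on_finset [PseudoMetricSpace X] [PseudoMetricSpace Y] {F : X → Y}
    {c K : ℝ≥0}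
    (hlift : ∀ x y, ∃ x', F x' = y ∧ dist x' x ≤ c⁻¹ * dist y (F x)) {γ : ℝ → Y} {x : X}
    (hx : γ 0 = F x) {T : ℝ} (hT : 0 ≤ T) (hγ : LipschitzOnWith K γ (Icc 0 T)) (S : Finset ℝ) :
    ∃ g : ℝ → X, g 0 = x ∧ (∀ t, dist (g t) x ≤ (c⁻¹ * K : ℝ≥0) * T) ∧
      LipschitzOnWith (c⁻¹ * K) g (S ∩ Icc 0 T) ∧ EqOn (F ∘ g) γ (S ∩ Icc 0 T) := by
  classical
  set S' := S.filter (· ∈ Ioc 0 T)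
  have hS' : ↑S' ⊆ Ioc 0 T := fun t ht => (Finset.mem_filter.1 ht).2
  have hsub : ↑S ∩ Icc 0 T ⊆ insert 0 ↑S' := by
    rintro t ⟨htS, h0t, htT⟩
    rcases h0t.eq_or_lt with rfl | h0t
    · exact mem_insert 0 _
    · exact mem_insert_of_mem 0 (Finset.mem_filter.2 ⟨htS, h0t, htT⟩)
  obtain ⟨g, hgL, hgF, hgx⟩ := exists_lift_on_finset hlift hx S' (fun t ht => (hS' ht).1)
    (hγ.mono (insert_subset ⟨le_rfl, hT⟩ (hS'.trans Ioc_subset_Icc_self)))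
  have hg0 : g 0 = x := hgx 0 fun h => (hS' h).1.false
  refine ⟨g, hg0, fun t => ?_, hgL.mono hsub, hgF.mono hsub⟩
  by_cases ht : t ∈ S'
  · calc dist (g t) x = dist (g t) (g 0) := by rw [hg0]
      _ ≤ (c⁻¹ * K : ℝ≥0) * dist t 0 :=
        hgL.dist_le_mul t (mem_insert_of_mem 0 ht) 0 (mem_insert 0 _)
      _ ≤ (c⁻¹ * K : ℝ≥0) * T := by
        rw [Real.dist_0_eq_abs, abs_of_pos (hS' ht).1]
        exact mul_le_mul_of_nonneg_left (hS' ht).2 (by positivity)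
  · rw [hgx t ht, dist_self]
    positivity

theorem exists_lift_of_forall_finset {α : Type*} [PseudoEMetricSpace α] [MetricSpace X]
    [ProperSpace X] [TopologicalSpace Y] [T2Space Y] {F : X → Y} (hF : Continuous F) {γ : α → Y} {s : Set α}
    {K : ℝ≥0} {t₀ : α} {x : X} {R : ℝ}
    (h : ∀ S : Finset α, ∃ g : α → X, g t₀ = x ∧ (∀ t, dist (g t) x ≤ R) ∧
      LipschitzOnWith K g (S ∩ s) ∧ EqOn (F ∘ g) γ (S ∩ s)) :
    ∃ g : α → X, LipschitzOnWith K g s ∧ g t₀ = x ∧ EqOn (F ∘ g) γ s := by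
  classical
  let C : Finset α → Set (α → X) := fun S => {g | g t₀ = x} ∩ {g | LipschitzOnWith K g (S ∩ s)} ∩
    {g | EqOn (F ∘ g) γ (S ∩ s)} ∩ univ.pi fun _ => closedBall x R
  have hclosed : ∀ S, IsClosed (C S) := fun S => by
    refine (((isClosed_eq (continuous_apply t₀) continuous_const).inter
      (isClosed_setOfPred_lipschitzOnWith K _)).inter ?_).inter
      (isClosed_set_pi fun _ _ => isClosed_closedBall)
    simp only [EqOn, ofPred_forall]
    exact isClosed_biInter fun t _ => isClosed_eq (hF.comp (continuous_apply t)) continuous_const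
  have hanti : ∀ {S S'}, S ⊆ S' → C S' ⊆ C S := fun hSS' g ⟨⟨⟨h0, hL⟩, hE⟩, hb⟩ =>
    have hsub := inter_subset_inter_left s (Finset.coe_subset.2 hSS')
    ⟨⟨⟨h0, hL.mono hsub⟩, hE.mono hsub⟩, hb⟩
  have hdir : Directed (· ⊇ ·) C := fun S S' =>
    ⟨S ∪ S', hanti Finset.subset_union_left, hanti Finset.subset_union_right⟩
  have hne : ∀ S, (C S).Nonempty := fun S =>
    let ⟨g, h0, hb, hL, hE⟩ := h S
    ⟨g, ⟨⟨h0, hL⟩, hE⟩, fun t _ => hb t⟩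
  have hcpt : ∀ S, IsCompact (C S) := fun S =>
    (isCompact_univ_pi fun _ => isCompact_closedBall x R).of_isClosed_subset (hclosed S)
      inter_subset_right
  obtain ⟨g, hg⟩ :=
    IsCompact.nonempty_iInter_of_directed_nonempty_isCompact_isClosed C hdir hne hcpt hclosed
  rw [mem_iInter] at hg
  refine ⟨g, fun a ha b hb => (hg {a, b}).1.1.2 ⟨by simp, ha⟩ ⟨by simp, hb⟩, (hg ∅).1.1.1,
    fun t ht => (hg {t}).1.2 ⟨by simp, ht⟩⟩

end Lifting

/-- Path lifting for Lipschitz quotients: if `X` is a proper metric space and `F : X → Y` is a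
Lipschitz quotient with co-Lipschitz constant `c > 0`, then every `1`-Lipschitz curve
`γ : [0,T] → Y` with `γ 0 = F x` lifts to a `(1/c)`-Lipschitz curve `γ̃ : [0,T] → X` with
`γ̃ 0 = x` and `F ∘ γ̃ = γ`. -/
theorem lipschitz_quotient_path_lifting
    {X : Type*} {Y : Type*} [MetricSpace X] [ProperSpace X] [MetricSpace Y]
    (F : X → Y) (L : ℝ≥0) (hF : LipschitzWith L F)
    (c : ℝ≥0) (hc : 0 < c)
    (hco : ∀ (x : X) (r : ℝ), 0 < r → ball (F x) ((c : ℝ) * r) ⊆ F '' ball x r)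
    (T : ℝ) (hT : 0 ≤ T) (γ : ℝ → Y) (hγ : LipschitzOnWith 1 γ (Icc 0 T))
    (x : X) (hx : γ 0 = F x) :
    ∃ γt : ℝ → X, LipschitzOnWith c⁻¹ γt (Icc 0 T) ∧ γt 0 = x ∧
      ∀ t ∈ Icc (0 : ℝ) T, F (γt t) = γ t := by
  have hlift := exists_preimage_dist_le_of_ball_subset_image hF.continuous hc hco
  obtain ⟨g, hgL, hg0, hgF⟩ :=
    exists_lift_of_forall_finset hF.continuous (exists_bounded_lift_on_finset hlift hx hT hγ)
  rw [mul_one] at hgL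
  exact ⟨g, hgL, hg0, fun t ht => hgF ht⟩
end
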